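/- Let G be a consistent perfect-information stochastic game with finitely many vertices and a tail winning condition W. Then for every initial vertex v_0, all strategies σ, τ, and every n ∈ ℕ, E^{σ,τ}_{v_0}[val(V_n)] = val(v_0); in particular, for any stopping time N (with respect to the filtration generated by (V_n)) and every n ∈ ℕ, E^{σ,τ}_{v_0}[val(V_{min(N,n)})] = val(v_0). -/

import Mathlib

open MeasureTheory ProbabilityTheory Filter Topology

attribute [local instance] Classical.propDecidable

namespace StochasticGames

/-- A perfect-information stochastic game arena: a partition of the finite vertex set into
Max vertices, min vertices and random vertices, an edge relation such that every vertex has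
an outgoing edge, and transition probabilities at random vertices, positive exactly on edges. -/
structure Game (V : Type) [Fintype V] where
  VMax : Set V
  Vmin : Set V
  VR : Set V
  E : V → V → Prop
  p : V → V → ℝ
  cover : ∀ v, v ∈ VMax ∨ v ∈ Vmin ∨ v ∈ VR
  disjMm : Disjoint VMax Vmin
  disjMR : Disjoint VMax VR
  disjmR : Disjoint Vmin VR
  succ_exists : ∀ v, ∃ w, E v w
  p_nonneg : ∀ v ∈ VR, ∀ w, 0 ≤ p v w
  p_sum : ∀ v ∈ VR, ∑ w, p v w = 1
  p_pos_iff : ∀ v ∈ VR, ∀ w, (0 < p v w ↔ E v w)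

variable {V : Type} [Fintype V] [MeasurableSpace V] [DiscreteMeasurableSpace V]

/-- The cylinder of plays starting with the finite word `h`. -/
def cyl (h : List V) : Set (ℕ → V) :=
  {ω | ∀ i : Fin h.length, ω i = h.get i}

/-- Prepend a finite word to an infinite word. -/
def prepend (h : List V) (q : ℕ → V) : ℕ → V :=
  fun n => if hn : n < h.length then h.get ⟨n, hn⟩ else q (n - h.length)

/-- A winning condition is tail if it is invariant under adding/removing finite prefixes. -/
def IsTail (W : Set (ℕ → V)) : Prop :=
  ∀ (h : List V) (q : ℕ → V), q ∈ W ↔ prepend h q ∈ W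

/-- A finite play: a nonempty word whose consecutive vertices are linked by edges. -/
def Game.FinitePlay (G : Game V) (h : List V) : Prop :=
  h ≠ [] ∧ h.Chain' G.E

/-- A strategy for player Max: after any finite play ending in a Max vertex,
it chooses a successor along an edge. -/
def Game.IsMaxStrategy (G : Game V) (σ : List V → V) : Prop :=
  ∀ h : List V, G.FinitePlay h → ∀ v, h.getLast? = some v → v ∈ G.VMax → G.E v (σ h)

/-- A strategy for player min. -/
def Game.IsMinStrategy (G : Game V) (τ : List V → V) : Prop :=
  ∀ h : List V, G.FinitePlay h → ∀ v, h.getLast? = some v → v ∈ G.Vmin → G.E v (τ h)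

/-- `μ` is the probability measure on plays induced by the initial vertex `v` and the
strategies `σ` (for Max) and `τ` (for min): the play starts at `v` almost surely and,
conditionally on any finite prefix of positive probability, the next vertex is chosen by
`σ`, by `τ`, or according to `G.p`, depending on the owner of the current vertex. -/
def Game.IsInduced (G : Game V) (σ τ : List V → V) (v : V) (μ : Measure (ℕ → V)) : Prop :=
  IsProbabilityMeasure μ ∧
  μ {ω | ω 0 = v} = 1 ∧
  ∀ (h : List V) (u : V), h.getLast? = some u → μ (cyl h) ≠ 0 →
    (u ∈ G.VMax → ProbabilityTheory.cond μ (cyl h) {ω | ω h.length = σ h} = 1) ∧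
    (u ∈ G.Vmin → ProbabilityTheory.cond μ (cyl h) {ω | ω h.length = τ h} = 1) ∧
    (u ∈ G.VR → ∀ w, ProbabilityTheory.cond μ (cyl h) {ω | ω h.length = w} =
      ENNReal.ofReal (G.p u w))

/-- A family of measures indexed by a pair of strategies and an initial vertex. -/
abbrev StratFam (V : Type) [MeasurableSpace V] :=
  (List V → V) → (List V → V) → V → Measure (ℕ → V)

/-- `P` assigns to every pair of strategies and every initial vertex the induced
probability measure on plays. -/
def Game.IsInducedFam (G : Game V) (P : StratFam V) : Prop :=
  ∀ σ τ v, G.IsInduced σ τ v (P σ τ v)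

/-- The value of a vertex: `val(v) = sup_σ inf_τ P^{σ,τ}_v(W)`. -/
noncomputable def Game.val (G : Game V) (W : Set (ℕ → V)) (P : StratFam V) (v : V) : ℝ :=
  ⨆ σ : {σ // G.IsMaxStrategy σ}, ⨅ τ : {τ // G.IsMinStrategy τ}, (P σ.1 τ.1 v W).toReal

/-- An optimal strategy for Max: it guarantees winning with probability `val(v)` from
every vertex `v`. -/
def Game.OptimalMax (G : Game V) (W : Set (ℕ → V)) (P : StratFam V) (σ : List V → V) : Prop :=
  G.IsMaxStrategy σ ∧
  ∀ v, (⨅ τ : {τ // G.IsMinStrategy τ}, (P σ τ.1 v W).toReal) = G.val W P v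

/-- An optimal strategy for min. -/
def Game.OptimalMin (G : Game V) (W : Set (ℕ → V)) (P : StratFam V) (τ : List V → V) : Prop :=
  G.IsMinStrategy τ ∧
  ∀ v, (⨆ σ : {σ // G.IsMaxStrategy σ}, (P σ.1 τ v W).toReal) = G.val W P v

/-- An `ε`-optimal strategy for Max. -/
def Game.EpsOptimalMax (G : Game V) (W : Set (ℕ → V)) (P : StratFam V) (ε : ℝ)
    (σ : List V → V) : Prop :=
  G.IsMaxStrategy σ ∧
  ∀ v, G.val W P v - ε ≤ ⨅ τ : {τ // G.IsMinStrategy τ}, (P σ τ.1 v W).toReal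

/-- A game is consistent if no edge out of a Max or min vertex changes the value. -/
def Game.Consistent (G : Game V) (W : Set (ℕ → V)) (P : StratFam V) : Prop :=
  ∀ v w, G.E v w → (v ∈ G.VMax ∨ v ∈ G.Vmin) → G.val W P v = G.val W P w

/-- The quality of the strategy `σ` after a finite play `v₀ v₁ ⋯ vₙ`:
`inf_τ P^{σ,τ}_{v₀}(W ∣ V₀ = v₀, …, Vₙ = vₙ)`. -/
noncomputable def Game.qual (G : Game V) (W : Set (ℕ → V)) (P : StratFam V)
    (σ : List V → V) : List V → ℝ
  | [] => 0
  | v :: l => ⨅ τ : {τ // G.IsMinStrategy τ},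
      (ProbabilityTheory.cond (P σ τ.1 v) (cyl (v :: l)) W).toReal

/-- The finite play `ω 0, ω 1, …, ω n`. -/
def prefixList (ω : ℕ → V) (n : ℕ) : List V := List.ofFn (fun i : Fin (n + 1) => ω i)

/-- The deviation date: the first time the quality of `σ` drops at least `m/2` below the
value of the current vertex (`∞` if this never happens). -/
noncomputable def Game.resetTime (G : Game V) (W : Set (ℕ → V)) (P : StratFam V)
    (σ : List V → V) (m : ℝ) (ω : ℕ → V) : ℕ∞ :=
  sInf ((fun n : ℕ => (n : ℕ∞)) ''
    {n | G.qual W P σ (prefixList ω n) ≤ G.val W P (ω n) - m / 2})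

/-- The date `t(v₀,…,vₙ)` of the latest deviation before date `n`, along the play `ω`. -/
noncomputable def Game.lastDevAux (G : Game V) (W : Set (ℕ → V)) (P : StratFam V)
    (σ : List V → V) (m : ℝ) (ω : ℕ → V) : ℕ → ℕ
  | 0 => 0
  | n + 1 =>
    let t := G.lastDevAux W P σ m ω n
    if G.val W P (ω (n + 1)) - m / 2 ≤ G.qual W P σ ((prefixList ω (n + 1)).drop t)
    then t else n + 1

/-- The date of the latest deviation, as a function of the finite play `h`. -/
noncomputable def Game.lastDev [Inhabited V] (G : Game V) (W : Set (ℕ → V)) (P : StratFam V)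
    (σ : List V → V) (m : ℝ) (h : List V) : ℕ :=
  G.lastDevAux W P σ m (fun i => h.getD i default) (h.length - 1)

/-- The reset strategy `σ'`: forget everything before the latest deviation and apply `σ`. -/
noncomputable def Game.resetStrat [Inhabited V] (G : Game V) (W : Set (ℕ → V))
    (P : StratFam V) (σ : List V → V) (m : ℝ) : List V → V :=
  fun h => σ (h.drop (G.lastDev W P σ m h))

/-- The σ-algebra generated by the coordinates `V₀, …, Vₙ`. -/
def hist (V : Type) [MeasurableSpace V] (n : ℕ) : MeasurableSpace (ℕ → V) :=
  MeasurableSpace.comap (fun ω (i : Fin (n + 1)) => ω i) inferInstance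

/-- The strategy `σ[h]` shifted by the finite play `h`:
`σ[h](w₀w₁⋯wₖ) = σ(v₀⋯vₙw₁⋯wₖ)` where `h = v₀⋯vₙ`. -/
def shiftStrat (s : List V → V) (h : List V) : List V → V := fun l => s (h ++ l.drop 1)

/-- The function `φ[h]` shifted by the finite play `h`:
`φ[h](w₀w₁w₂⋯) = φ(v₀⋯vₙw₁w₂⋯)` where `h = v₀⋯vₙ`. -/
def shiftFun {α : Type} (φ : (ℕ → V) → α) (h : List V) : (ℕ → V) → α :=
  fun q => φ (prepend h (fun n => q (n + 1)))

/-- A superfluous edge: a move of Max decreasing the value, or a move of min increasing it. -/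
def Game.Superfluous (G : Game V) (W : Set (ℕ → V)) (P : StratFam V) (v w : V) : Prop :=
  (v ∈ G.VMax ∧ G.val W P w < G.val W P v) ∨ (v ∈ G.Vmin ∧ G.val W P v < G.val W P w)

/-! The value process `n ↦ val(Vₙ)` is a martingale for the natural filtration of the play.
After a finite play ending at a Max or min vertex the next vertex is reached along an edge chosen
by a strategy, and consistency says that such an edge keeps the value. At a random vertex `u` the
value is the `p(u, ·)`-average of the values of the successors: because `W` is tail, conditioning
on the first move `u → w` and forgetting `u` turns the game from `u` into the game from `w`,
played with the continuations of `σ` and `τ`, and near-optimal strategies for the successors can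
be glued into one for `u`, for either player. The first claim follows, and the second is optional
stopping at the bounded stopping time `min N n`. -/

end StochasticGames

open Set

section Probability

variable {Ω : Type*}

lemma MeasureTheory.stoppedProcess_eq_toNat_min {β : Type*} {τ : Ω → ℕ∞} (u : ℕ → Ω → β)
    (n : ℕ) (ω : Ω) :
    stoppedProcess u τ n ω = u (min (τ ω) n).toNat ω := by
  rcases le_total (τ ω) n with h | h
  · rw [stoppedProcess_eq_of_ge h, min_eq_left h]
    lift τ ω to ℕ using ne_top_of_le_ne_top (ENat.natCast_ne_top n) h with k
    rfl
  · rw [stoppedProcess_eq_of_le h, min_eq_right h]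
    rfl

variable [MeasurableSpace Ω]

lemma ProbabilityTheory.measure_eq_zero_of_disjoint_of_eq_one {ν : Measure Ω}
    [IsProbabilityMeasure ν] {t t' : Set Ω} (ht : MeasurableSet t) (h1 : ν t = 1)
    (hdisj : Disjoint t' t) : ν t' = 0 :=
  measure_mono_null (subset_compl_iff_disjoint_right.2 hdisj) ((prob_compl_eq_zero_iff ht).2 h1)

lemma ProbabilityTheory.cond_map {Ω' : Type*} [MeasurableSpace Ω'] {μ : Measure Ω}
    {f : Ω → Ω'} (hf : Measurable f) {s : Set Ω'} (hs : MeasurableSet s) :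
    (μ.map f)[|s] = (μ[|f ⁻¹' s]).map f := by
  ext t ht
  rw [cond_apply hs, Measure.map_apply hf ht, Measure.map_apply hf hs,
    Measure.map_apply hf (hs.inter ht), cond_apply (hf hs), preimage_inter]

variable {μ : Measure Ω} {𝒢 : Filtration ℕ ‹_›} {f : ℕ → Ω → ℝ} {τ : Ω → ℕ∞}

lemma MeasureTheory.Martingale.integral_eq_integral_zero [IsFiniteMeasure μ]
    (hf : Martingale f 𝒢 μ) (n : ℕ) : ∫ ω, f n ω ∂μ = ∫ ω, f 0 ω ∂μ := by
  simpa using (hf.setIntegral_eq (Nat.zero_le n) MeasurableSet.univ).symm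

protected lemma MeasureTheory.Martingale.stoppedProcess [IsFiniteMeasure μ]
    (hf : Martingale f 𝒢 μ) (hτ : IsStoppingTime 𝒢 τ) : Martingale (stoppedProcess f τ) 𝒢 μ := by
  refine martingale_iff.2 ⟨?_, hf.submartingale.stoppedProcess hτ⟩
  convert (hf.neg.submartingale.stoppedProcess hτ).neg using 1
  ext i ω
  simp [stoppedProcess]

lemma MeasureTheory.Martingale.integral_stoppedProcess [IsFiniteMeasure μ]
    (hf : Martingale f 𝒢 μ) (hτ : IsStoppingTime 𝒢 τ) (n : ℕ) :
    ∫ ω, stoppedProcess f τ n ω ∂μ = ∫ ω, f 0 ω ∂μ := by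
  rw [(hf.stoppedProcess hτ).integral_eq_integral_zero n]
  exact integral_congr_ae (ae_of_all _ fun ω => stoppedProcess_eq_of_le zero_le)

end Probability

namespace StochasticGames

section Plays

variable {α : Type*}

def shift (ω : ℕ → α) : ℕ → α := fun n => ω (n + 1)

variable [MeasurableSpace α]

lemma measurable_shift : Measurable (shift (α := α)) :=
  measurable_pi_lambda _ fun n => measurable_pi_apply (n + 1)

variable [MeasurableSingletonClass α]

lemma measurableSet_eval_eq (n : ℕ) (x : α) : MeasurableSet {ω : ℕ → α | ω n = x} :=
  measurableSet_singleton x |>.preimage (measurable_pi_apply n)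

lemma restrict_apply_eval_eq {μ : Measure (ℕ → α)} (s : Set (ℕ → α)) (n : ℕ) (x : α) :
    μ.restrict s ((fun ω => ω n) ⁻¹' {x}) = μ (s ∩ {ω | ω n = x}) := by
  rw [Measure.restrict_apply (t := (fun ω : ℕ → α => ω n) ⁻¹' {x}) (measurableSet_eval_eq n x),
    inter_comm]
  rfl

variable [Fintype α]

lemma measure_eq_sum_inter_eval_eq (μ : Measure (ℕ → α)) (n : ℕ) (s : Set (ℕ → α)) :
    μ s = ∑ x, μ (s ∩ {ω | ω n = x}) := by
  have := sum_measure_preimage_singleton (μ := μ.restrict s) Finset.univ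
    fun x _ => measurableSet_eval_eq (α := α) n x
  simp only [Finset.coe_univ, preimage_univ, Measure.restrict_apply_univ,
    restrict_apply_eval_eq] at this
  exact this.symm

lemma setIntegral_comp_eval (μ : Measure (ℕ → α)) [IsFiniteMeasure μ] (s : Set (ℕ → α))
    (g : α → ℝ) (n : ℕ) : ∫ ω in s, g (ω n) ∂μ = ∑ x, μ.real (s ∩ {ω | ω n = x}) * g x := by
  rw [← integral_map (measurable_pi_apply n).aemeasurable (by fun_prop),
    integral_fintype Integrable.of_finite]
  refine Finset.sum_congr rfl fun x _ => ?_
  rw [smul_eq_mul, measureReal_def, Measure.map_apply (measurable_pi_apply n)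
    (measurableSet_singleton x), restrict_apply_eval_eq, measureReal_def]

end Plays

lemma prepend_singleton_shift {α : Type} (ω : ℕ → α) : prepend [ω 0] (shift ω) = ω := by
  funext n
  cases n <;> simp [prepend, shift]

lemma IsTail.preimage_shift {α : Type} {W : Set (ℕ → α)} (hW : IsTail W) : shift ⁻¹' W = W := by
  ext ω
  conv_rhs => rw [← prepend_singleton_shift ω]
  exact hW [ω 0] (shift ω)

section Cylinders

variable {α : Type}

lemma mem_cyl {h : List α} {ω : ℕ → α} : ω ∈ cyl h ↔ ∀ i (hi : i < h.length), ω i = h[i] := by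
  simp [cyl, Fin.forall_iff]

@[simp] lemma cyl_nil : cyl ([] : List α) = univ := by
  ext ω; simp [mem_cyl]

lemma cyl_singleton (x : α) : cyl [x] = {ω : ℕ → α | ω 0 = x} := by
  ext ω; simp [mem_cyl]

lemma cyl_append (h : List α) (x : α) :
    cyl (h ++ [x]) = cyl h ∩ {ω : ℕ → α | ω h.length = x} := by
  ext ω
  simp only [mem_cyl, List.length_append, List.length_singleton, mem_inter_iff, mem_ofPred_eq]
  constructor
  · intro hω
    refine ⟨fun i hi => ?_, by simpa using hω h.length (by omega)⟩
    rw [hω i (by omega), List.getElem_append_left hi]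
  · rintro ⟨hω, hx⟩ i hi
    rcases Nat.lt_succ_iff_lt_or_eq.1 hi with hi | rfl
    · rw [hω i hi, List.getElem_append_left hi]
    · simpa using hx

lemma cyl_cons (u : α) (l : List α) :
    cyl (u :: l) = {ω : ℕ → α | ω 0 = u} ∩ shift ⁻¹' cyl l := by
  ext ω
  simp only [mem_cyl, mem_inter_iff, mem_preimage, shift, List.length_cons]
  constructor
  · intro hω
    exact ⟨hω 0 (by omega), fun i hi => hω (i + 1) (by omega)⟩
  · rintro ⟨h0, hω⟩ (_ | i) hi
    exacts [h0, hω i (by omega)]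

lemma cyl_ofFn {n : ℕ} (f : Fin n → α) :
    cyl (List.ofFn f) = {ω : ℕ → α | ∀ i : Fin n, ω i = f i} := by
  ext ω
  simp [mem_cyl, Fin.forall_iff]

lemma cyl_pair_inter_preimage_shift (u w : α) (l : List α) :
    cyl [u, w] ∩ shift ⁻¹' cyl (w :: l) = cyl (u :: w :: l) := by
  ext ω
  simp only [mem_inter_iff, mem_preimage, mem_cyl, List.length_cons, shift]
  constructor
  · rintro ⟨h2, hl⟩ (_ | i) hi
    exacts [h2 0 (by simp), hl i (by omega)]
  · intro h
    refine ⟨fun i hi => ?_, fun i hi => h (i + 1) (by omega)⟩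
    rcases i with _ | _ | i
    exacts [h 0 (by omega), h 1 (by omega), absurd hi (by simp)]

lemma cyl_pair_inter_preimage_shift_of_ne {u w x : α} (hx : x ≠ w) (l : List α) :
    cyl [u, w] ∩ shift ⁻¹' cyl (x :: l) = ∅ := by
  refine eq_empty_of_forall_notMem fun ω ⟨h2, hl⟩ => hx ?_
  rw [mem_preimage, mem_cyl] at hl
  rw [mem_cyl] at h2
  exact (hl 0 (by simp)).symm.trans (h2 1 (by simp))

lemma eval_eq_of_mem_cyl {l : List α} {u : α} {ω : ℕ → α} (hω : ω ∈ cyl l)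
    (hu : l.getLast? = some u) : ω (l.length - 1) = u := by
  rw [List.getLast?_eq_getElem?] at hu
  obtain ⟨hl, rfl⟩ := List.getElem?_eq_some_iff.1 hu
  exact mem_cyl.1 hω _ hl

lemma isPiSystem_cyl : IsPiSystem (range (cyl (V := α))) := by
  have key : ∀ a b : List α, a.length ≤ b.length → (cyl a ∩ cyl b).Nonempty →
      cyl a ∩ cyl b = cyl b := by
    rintro a b hab ⟨ω₀, hωa, hωb⟩
    refine inter_eq_self_of_subset_right fun ω hω => mem_cyl.2 fun i hi => ?_
    rw [mem_cyl] at hωa hωb hω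
    rw [hω i (by omega), ← hωb i (by omega), hωa i hi]
  rintro _ ⟨a, rfl⟩ _ ⟨b, rfl⟩ hne
  rcases le_total a.length b.length with hab | hba
  · exact ⟨b, (key a b hab hne).symm⟩
  · rw [inter_comm] at hne ⊢
    exact ⟨a, (key b a hba hne).symm⟩

variable [MeasurableSpace α] [MeasurableSingletonClass α]

lemma measurableSet_cyl (h : List α) : MeasurableSet (cyl h) := by
  have : cyl h = ⋂ (i : ℕ) (hi : i < h.length), {ω : ℕ → α | ω i = h[i]} := by
    ext ω; simp [mem_cyl]
  rw [this]
  exact .iInter fun i => .iInter fun hi => measurableSet_eval_eq _ _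

lemma setIntegral_cyl_comp_last {μ : Measure (ℕ → α)} {l : List α} {u : α}
    (hu : l.getLast? = some u) (g : α → ℝ) :
    ∫ ω in cyl l, g (ω (l.length - 1)) ∂μ = μ.real (cyl l) * g u := by
  rw [setIntegral_congr_fun (measurableSet_cyl l)
    fun ω hω => congrArg g (eval_eq_of_mem_cyl hω hu), setIntegral_const, smul_eq_mul]

lemma cond_cyl_cons_map_shift_cond {μ : Measure (ℕ → α)} [IsFiniteMeasure μ] {u w : α}
    (l : List α) :
    ((μ[|cyl [u, w]]).map shift)[|cyl (w :: l)] = (μ[|cyl (u :: w :: l)]).map shift := by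
  rw [cond_map measurable_shift (measurableSet_cyl _),
    cond_cond_eq_cond_inter (measurableSet_cyl _) (measurable_shift (measurableSet_cyl _)),
    cyl_pair_inter_preimage_shift]

variable [Countable α]

lemma generateFrom_cyl :
    MeasurableSpace.generateFrom (range (cyl (V := α))) = MeasurableSpace.pi := by
  refine le_antisymm (MeasurableSpace.generateFrom_le ?_) (iSup_le fun i => ?_)
  · rintro _ ⟨h, rfl⟩
    exact measurableSet_cyl h
  rw [MeasurableSpace.comap_le_iff_le_map]
  intro s _
  have : (fun ω : ℕ → α => ω i) ⁻¹' s =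
      ⋃ (l : List α) (hl : i < l.length) (_ : l[i] ∈ s), cyl l := by
    ext ω
    simp only [mem_preimage, mem_iUnion]
    refine ⟨fun hω => ⟨(List.range (i + 1)).map ω, by simp, by simpa using hω, ?_⟩, ?_⟩
    · simp [mem_cyl]
    · rintro ⟨l, hl, hs, hω⟩
      rwa [mem_cyl.1 hω i hl]
  rw [MeasurableSpace.map_def, this]
  exact .iUnion fun l => .iUnion fun hl => .iUnion fun _ =>
    MeasurableSpace.measurableSet_generateFrom ⟨l, rfl⟩

lemma ext_of_cyl {μ ν : Measure (ℕ → α)} [IsFiniteMeasure μ]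
    (h : ∀ l : List α, μ (cyl l) = ν (cyl l)) : μ = ν :=
  ext_of_generate_finite _ generateFrom_cyl.symm isPiSystem_cyl (by rintro _ ⟨l, rfl⟩; exact h l)
    (by simpa using h [])

end Cylinders

section History

variable {V : Type} [MeasurableSpace V]

lemma measurable_restrictFin (n : ℕ) : Measurable fun (ω : ℕ → V) (i : Fin (n + 1)) => ω i :=
  measurable_pi_lambda _ fun _ => measurable_pi_apply _

def histFiltration : Filtration ℕ (MeasurableSpace.pi : MeasurableSpace (ℕ → V)) where
  seq := hist V
  mono' n m hnm := by
    have : (fun (ω : ℕ → V) (i : Fin (n + 1)) => ω i) =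
        (fun (g : Fin (m + 1) → V) (i : Fin (n + 1)) => g (Fin.castLE (by omega) i)) ∘
          fun (ω : ℕ → V) (i : Fin (m + 1)) => ω i := rfl
    simp only [hist]
    rw [this, ← MeasurableSpace.comap_comp]
    exact MeasurableSpace.comap_mono
      (measurable_pi_lambda _ fun _ => measurable_pi_apply _).comap_le
  le' n := (measurable_restrictFin n).comap_le

lemma measurable_hist_eval (n : ℕ) : Measurable[hist V n] fun ω : ℕ → V => ω n :=
  (measurable_pi_apply (Fin.last n)).comp
    (comap_measurable fun (ω : ℕ → V) (i : Fin (n + 1)) => ω i)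

lemma exists_finset_eq_biUnion_cyl [Fintype V] {n : ℕ} {s : Set (ℕ → V)}
    (hs : MeasurableSet[hist V n] s) :
    ∃ B : Finset (Fin (n + 1) → V), s = ⋃ f ∈ B, cyl (List.ofFn f) := by
  obtain ⟨B, -, rfl⟩ := hs
  refine ⟨Finset.univ.filter (· ∈ B), ?_⟩
  ext ω
  simp only [mem_preimage, Finset.mem_filter, Finset.mem_univ, true_and, mem_iUnion, cyl_ofFn,
    mem_ofPred_eq, exists_prop]
  exact ⟨fun hω => ⟨_, hω, fun i => rfl⟩, fun ⟨f, hf, hω⟩ => (funext hω : _ = f) ▸ hf⟩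

end History

section Transition

variable {V : Type} [Fintype V]

/-- `u` is the last vertex of `h`. -/
noncomputable def Game.transition (G : Game V) (σ τ : List V → V) (h : List V) (u x : V) :
    ENNReal :=
  if u ∈ G.VMax then (if x = σ h then 1 else 0)
  else if u ∈ G.Vmin then (if x = τ h then 1 else 0)
  else ENNReal.ofReal (G.p u x)

variable {G : Game V} {σ τ : List V → V} {h : List V} {u x : V}

lemma Game.transition_of_mem_max (hu : u ∈ G.VMax) :
    G.transition σ τ h u x = if x = σ h then 1 else 0 := if_pos hu

lemma Game.transition_of_mem_min (hu : u ∈ G.Vmin) :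
    G.transition σ τ h u x = if x = τ h then 1 else 0 := by
  rw [Game.transition, if_neg (G.disjMm.notMem_of_mem_right hu), if_pos hu]

lemma Game.transition_of_mem_random (hu : u ∈ G.VR) :
    G.transition σ τ h u x = ENNReal.ofReal (G.p u x) := by
  rw [Game.transition, if_neg (G.disjMR.notMem_of_mem_right hu),
    if_neg (G.disjmR.notMem_of_mem_right hu)]

lemma Game.edge_of_transition_ne_zero (hσ : G.IsMaxStrategy σ) (hτ : G.IsMinStrategy τ)
    (hh : G.FinitePlay h) (hu : h.getLast? = some u) (hx : G.transition σ τ h u x ≠ 0) :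
    G.E u x := by
  rcases G.cover u with hM | hm | hR
  · rw [G.transition_of_mem_max hM, ite_ne_right_iff] at hx
    exact hx.1 ▸ hσ h hh u hu hM
  · rw [G.transition_of_mem_min hm, ite_ne_right_iff] at hx
    exact hx.1 ▸ hτ h hh u hu hm
  · rw [G.transition_of_mem_random hR, ne_eq, ENNReal.ofReal_eq_zero, not_le] at hx
    exact (G.p_pos_iff u hR x).1 hx

lemma Game.sum_p_mul_add (hu : u ∈ G.VR) (f : V → ℝ) (c : ℝ) :
    ∑ w, G.p u w * (f w + c) = ∑ w, G.p u w * f w + c := by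
  simp only [mul_add, Finset.sum_add_distrib, ← Finset.sum_mul, G.p_sum u hu, one_mul]

end Transition

section Induced

variable {V : Type} [Fintype V] [MeasurableSpace V] {G : Game V} {σ τ : List V → V}
  {h : List V} {u v w x : V} {μ : Measure (ℕ → V)}

lemma Game.IsInduced.congr (hμ : G.IsInduced σ τ v μ) {σ' τ' : List V → V}
    (hs : ∀ h : List V, h ≠ [] → μ (cyl h) ≠ 0 → σ h = σ' h ∧ τ h = τ' h) :
    G.IsInduced σ' τ' v μ := by
  refine ⟨hμ.1, hμ.2.1, fun h u hu h0 => ?_⟩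
  obtain ⟨hσ, hτ⟩ := hs h (by rintro rfl; simp at hu) h0
  obtain ⟨hM, hm, hR⟩ := hμ.2.2 h u hu h0
  exact ⟨hσ ▸ hM, hτ ▸ hm, hR⟩

variable [MeasurableSingletonClass V]

lemma Game.IsInduced.cond_eq_transition (hμ : G.IsInduced σ τ v μ) (hu : h.getLast? = some u)
    (h0 : μ (cyl h) ≠ 0) (x : V) :
    μ[|cyl h] {ω | ω h.length = x} = G.transition σ τ h u x := by
  have := hμ.1
  have := cond_isProbabilityMeasure h0
  have hdisj (y : V) (hxy : x ≠ y) :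
      Disjoint {ω : ℕ → V | ω h.length = x} {ω | ω h.length = y} :=
    disjoint_left.2 fun ω hx hy => hxy (hx.symm.trans hy)
  obtain ⟨hM, hm, hR⟩ := hμ.2.2 h u hu h0
  rcases G.cover u with hu' | hu' | hu'
  · rw [G.transition_of_mem_max hu']
    split_ifs with hx
    · exact hx ▸ hM hu'
    · exact measure_eq_zero_of_disjoint_of_eq_one (measurableSet_eval_eq _ _) (hM hu')
        (hdisj _ hx)
  · rw [G.transition_of_mem_min hu']
    split_ifs with hx
    · exact hx ▸ hm hu'
    · exact measure_eq_zero_of_disjoint_of_eq_one (measurableSet_eval_eq _ _) (hm hu')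
        (hdisj _ hx)
  · rw [G.transition_of_mem_random hu']
    exact hR hu' x

lemma Game.IsInduced.measure_cyl_append (hμ : G.IsInduced σ τ v μ)
    (hu : h.getLast? = some u) (x : V) :
    μ (cyl (h ++ [x])) = μ (cyl h) * G.transition σ τ h u x := by
  have := hμ.1
  rw [cyl_append]
  by_cases h0 : μ (cyl h) = 0
  · rw [h0, zero_mul]
    exact measure_mono_null inter_subset_left h0
  · rw [← hμ.cond_eq_transition hu h0, ← cond_mul_eq_inter (measurableSet_cyl h), mul_comm]

lemma Game.IsInduced.measure_cyl_singleton (hμ : G.IsInduced σ τ v μ) (x : V) :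
    μ (cyl [x]) = if x = v then 1 else 0 := by
  have := hμ.1
  rw [cyl_singleton]
  split_ifs with hx
  · exact hx ▸ hμ.2.1
  · exact measure_eq_zero_of_disjoint_of_eq_one (measurableSet_eval_eq 0 v) hμ.2.1
      (disjoint_left.2 fun ω h1 h2 => hx (h1.symm.trans h2))

lemma Game.IsInduced.measure_cyl_pair (hμ : G.IsInduced σ τ v μ) (hv : v ∈ G.VR) (w : V) :
    μ (cyl [v, w]) = ENNReal.ofReal (G.p v w) := by
  rw [← List.singleton_append, hμ.measure_cyl_append (u := v) rfl, hμ.measure_cyl_singleton,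
    if_pos rfl, one_mul, G.transition_of_mem_random hv]

lemma Game.IsInduced.unique {ν : Measure (ℕ → V)} (hμ : G.IsInduced σ τ v μ)
    (hν : G.IsInduced σ τ v ν) : μ = ν := by
  have := hμ.1
  refine ext_of_cyl fun l => ?_
  induction l using List.reverseRecOn with
  | nil => simp [hμ.1.measure_univ, hν.1.measure_univ]
  | append_singleton l x ih =>
    rcases l.getLast?.eq_none_or_eq_some with hl | ⟨u, hu⟩
    · rw [List.getLast?_eq_none_iff] at hl
      subst hl
      rw [List.nil_append, hμ.measure_cyl_singleton, hν.measure_cyl_singleton]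
    · rw [hμ.measure_cyl_append hu, hν.measure_cyl_append hu, ih]

lemma Game.IsInduced.head?_eq (hμ : G.IsInduced σ τ v μ) {l : List V} (h0 : μ (cyl l) ≠ 0)
    (hl : l ≠ []) : l.head? = some v := by
  obtain ⟨x, l, rfl⟩ := List.exists_cons_of_ne_nil hl
  have hsub : cyl (x :: l) ⊆ cyl [x] := by
    rw [cyl_cons, cyl_singleton]
    exact inter_subset_left
  have hx : μ (cyl [x]) ≠ 0 := fun h => h0 (measure_mono_null hsub h)
  rw [hμ.measure_cyl_singleton] at hx
  simpa using hx

lemma Game.IsInduced.finitePlay (hμ : G.IsInduced σ τ v μ) (hσ : G.IsMaxStrategy σ)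
    (hτ : G.IsMinStrategy τ) {l : List V} (h0 : μ (cyl l) ≠ 0) (hl : l ≠ []) :
    G.FinitePlay l := by
  induction l using List.reverseRecOn with
  | nil => exact absurd rfl hl
  | append_singleton l x ih =>
    rcases l.getLast?.eq_none_or_eq_some with hl' | ⟨u, hu⟩
    · rw [List.getLast?_eq_none_iff] at hl'
      subst hl'
      exact ⟨by simp, List.isChain_singleton x⟩
    · rw [hμ.measure_cyl_append hu, mul_ne_zero_iff] at h0
      have hl : l ≠ [] := by rintro rfl; simp at hu
      have hchain := (ih h0.1 hl).2
      have hux := G.edge_of_transition_ne_zero hσ hτ ⟨hl, hchain⟩ hu h0.2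
      refine ⟨by simp, List.isChain_append.2 ⟨hchain, List.isChain_singleton x, ?_⟩⟩
      intro y hy z hz
      simp_all

lemma Game.IsInduced.map_shift_cond (hμ : G.IsInduced σ τ u μ) (hC : μ (cyl [u, w]) ≠ 0) :
    G.IsInduced (shiftStrat σ [u, w]) (shiftStrat τ [u, w]) w ((μ[|cyl [u, w]]).map shift) := by
  have := hμ.1
  have := cond_isProbabilityMeasure hC
  refine ⟨Measure.isProbabilityMeasure_map measurable_shift.aemeasurable, ?_, ?_⟩
  · have hsub : cyl [u, w] ⊆ shift ⁻¹' {ω | ω 0 = w} := fun ω hω => mem_cyl.1 hω 1 (by simp)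
    rw [Measure.map_apply measurable_shift (measurableSet_eval_eq 0 w)]
    exact le_antisymm prob_le_one (cond_apply_self hC (measure_ne_top _ _) ▸ measure_mono hsub)
  rintro (_ | ⟨x, l⟩) u' hu' h0
  · simp at hu'
  obtain rfl : x = w := by
    by_contra hx
    rw [Measure.map_apply measurable_shift (measurableSet_cyl _),
      cond_apply (measurableSet_cyl _), cyl_pair_inter_preimage_shift_of_ne hx] at h0
    simp at h0
  have h0' : μ (cyl (u :: x :: l)) ≠ 0 := by
    rw [Measure.map_apply measurable_shift (measurableSet_cyl _)] at h0
    rw [← cyl_pair_inter_preimage_shift]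
    exact (inter_pos_of_cond_ne_zero (measurableSet_cyl _) h0).ne'
  have hstep (y : V) : (μ[|cyl (u :: x :: l)]).map shift {ω | ω (x :: l).length = y} =
      μ[|cyl (u :: x :: l)] {ω | ω (u :: x :: l).length = y} :=
    Measure.map_apply measurable_shift (measurableSet_eval_eq _ _)
  rw [cond_cyl_cons_map_shift_cond]
  simp only [hstep]
  exact hμ.2.2 (u :: x :: l) u' (by rwa [List.getLast?_cons_cons]) h0'

lemma Game.IsInduced.integral_comp_zero (hμ : G.IsInduced σ τ v μ) (g : V → ℝ) :
    ∫ ω, g (ω 0) ∂μ = g v := by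
  have := hμ.1
  rw [← setIntegral_univ, setIntegral_comp_eval]
  simp [measureReal_def, ← cyl_singleton, hμ.measure_cyl_singleton, apply_ite ENNReal.toReal]

end Induced

section Strategies

variable {V : Type} [Fintype V] (G : Game V)

def Game.IsStrategyOn (S : Set V) (s : List V → V) : Prop :=
  ∀ h : List V, G.FinitePlay h → ∀ v, h.getLast? = some v → v ∈ S → G.E v (s h)

noncomputable def Game.someSucc (v : V) : V := (G.succ_exists v).choose

lemma Game.edge_someSucc (v : V) : G.E v (G.someSucc v) := (G.succ_exists v).choose_spec

/-- `a` stands in for the last vertex of the empty play. -/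
noncomputable def Game.defaultStrat (a : V) : List V → V := fun h => G.someSucc (h.getLastD a)

/-- After the first move `u → w`, play as `t w` does from `w`. -/
noncomputable def Game.branchStrat (u : V) (t : V → List V → V) : List V → V :=
  {l | 2 ≤ l.length}.piecewise (fun l => t (l.getD 1 u) (l.drop 1)) (G.defaultStrat u)

/-- The continuation of `s` after the first move `u → w`, as a strategy from `w`. -/
noncomputable def Game.residual (u w : V) (s : List V → V) : List V → V :=
  {l | l.head? = some w}.piecewise (shiftStrat s [u, w]) (G.defaultStrat w)

variable {G} {S : Set V} {s : List V → V} {u w : V}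

lemma Game.isStrategyOn_defaultStrat (S : Set V) (a : V) :
    G.IsStrategyOn S (G.defaultStrat a) := by
  intro h _ v hv _
  rw [Game.defaultStrat, List.getLastD_eq_getLast?, hv]
  exact G.edge_someSucc v

lemma Game.isStrategyOn_piecewise {T : Set (List V)} [DecidablePred (· ∈ T)] (a : V)
    (hs : ∀ h ∈ T, G.FinitePlay h → ∀ v, h.getLast? = some v → v ∈ S → G.E v (s h)) :
    G.IsStrategyOn S (T.piecewise s (G.defaultStrat a)) := by
  intro h hh v hv hvS
  by_cases hT : h ∈ T
  · rw [piecewise_eq_of_mem _ _ _ hT]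
    exact hs h hT hh v hv hvS
  · rw [piecewise_eq_of_notMem _ _ _ hT]
    exact G.isStrategyOn_defaultStrat S a h hh v hv hvS

lemma Game.IsStrategyOn.branchStrat {t : V → List V → V} (ht : ∀ w, G.IsStrategyOn S (t w)) :
    G.IsStrategyOn S (G.branchStrat u t) := by
  unfold Game.branchStrat
  refine G.isStrategyOn_piecewise u fun h hlen hh v hv hvS => ?_
  obtain ⟨a, b, r, rfl⟩ : ∃ a b r, h = a :: b :: r := by
    match h, hlen with
    | a :: b :: r, _ => exact ⟨a, b, r, rfl⟩
  exact ht b (b :: r) ⟨List.cons_ne_nil b r, hh.2.tail⟩ v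
    (by rwa [List.getLast?_cons_cons] at hv) hvS

lemma Game.IsStrategyOn.residual (hs : G.IsStrategyOn S s) (huw : G.E u w) :
    G.IsStrategyOn S (G.residual u w s) := by
  unfold Game.residual
  refine G.isStrategyOn_piecewise w fun h hhead hh v hv hvS => ?_
  obtain ⟨r, rfl⟩ : ∃ r, h = w :: r := by
    match h, hhead with
    | _ :: r, rfl => exact ⟨r, rfl⟩
  exact hs (u :: w :: r) ⟨List.cons_ne_nil _ _, List.isChain_cons_cons.2 ⟨huw, hh.2⟩⟩ v
    (by rwa [List.getLast?_cons_cons]) hvS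

lemma Game.residual_of_head?_eq {l : List V} (hl : l.head? = some w) :
    G.residual u w s l = shiftStrat s [u, w] l :=
  piecewise_eq_of_mem _ _ _ hl

lemma Game.residual_branchStrat {t : V → List V → V} {l : List V} (hl : l.head? = some w) :
    G.residual u w (G.branchStrat u t) l = t w l := by
  obtain ⟨r, rfl⟩ : ∃ r, l = w :: r := by
    match l, hl with
    | _ :: r, rfl => exact ⟨r, rfl⟩
  rw [G.residual_of_head?_eq rfl, shiftStrat, Game.branchStrat,
    piecewise_eq_of_mem _ _ _ (by simp)]
  rfl

end Strategies

section Decomposition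

variable {V : Type} [Fintype V] [MeasurableSpace V] [MeasurableSingletonClass V] {G : Game V}
  {W : Set (ℕ → V)} {P : StratFam V} {σ τ : List V → V} {u w : V}

lemma Game.IsInducedFam.eq_of_agree (hP : G.IsInducedFam P) {σ' τ' : List V → V}
    (hσ : G.IsMaxStrategy σ) (hτ : G.IsMinStrategy τ) (w : V)
    (hagree : ∀ l, G.FinitePlay l → l.head? = some w → σ l = σ' l ∧ τ l = τ' l) :
    P σ τ w = P σ' τ' w := by
  have hμ := hP σ τ w
  refine (hμ.congr fun l hl h0 => ?_).unique (hP σ' τ' w)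
  exact hagree l (hμ.finitePlay hσ hτ h0 hl) (hμ.head?_eq h0 hl)

lemma Game.IsInducedFam.map_shift_cond (hP : G.IsInducedFam P)
    (hC : P σ τ u (cyl [u, w]) ≠ 0) :
    ((P σ τ u)[|cyl [u, w]]).map shift = P (G.residual u w σ) (G.residual u w τ) w := by
  have hν := (hP σ τ u).map_shift_cond hC
  refine (hν.congr fun l hl h0 => ?_).unique (hP _ _ w)
  have hhead := hν.head?_eq h0 hl
  exact ⟨(G.residual_of_head?_eq hhead).symm, (G.residual_of_head?_eq hhead).symm⟩

lemma Game.IsInducedFam.measure_eq_sum (hW : MeasurableSet W) (hTail : IsTail W)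
    (hP : G.IsInducedFam P) (hu : u ∈ G.VR) :
    P σ τ u W = ∑ w, ENNReal.ofReal (G.p u w) * P (G.residual u w σ) (G.residual u w τ) w W := by
  have hμ := hP σ τ u
  have := hμ.1
  have hstart : P σ τ u (cyl [u])ᶜ = 0 := by
    rw [prob_compl_eq_zero_iff (measurableSet_cyl _), hμ.measure_cyl_singleton, if_pos rfl]
  rw [← measure_inter_conull hstart, measure_eq_sum_inter_eval_eq _ 1]
  refine Finset.sum_congr rfl fun w _ => ?_
  have hset : W ∩ cyl [u] ∩ {ω | ω 1 = w} = cyl [u, w] ∩ W := by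
    rw [inter_assoc, ← List.length_singleton (a := u), ← cyl_append, inter_comm]
    rfl
  rw [hset, ← cond_mul_eq_inter (measurableSet_cyl _), mul_comm, ← hμ.measure_cyl_pair hu w]
  by_cases hC : P σ τ u (cyl [u, w]) = 0
  · rw [hC, zero_mul, zero_mul]
  · rw [← hP.map_shift_cond hC, Measure.map_apply measurable_shift hW, hTail.preimage_shift]

lemma Game.IsInducedFam.prob_toReal_eq_sum (hW : MeasurableSet W) (hTail : IsTail W)
    (hP : G.IsInducedFam P) (hu : u ∈ G.VR) :
    (P σ τ u W).toReal =
      ∑ w, G.p u w * (P (G.residual u w σ) (G.residual u w τ) w W).toReal := by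
  have hfin (σ' τ' : List V → V) (w : V) : P σ' τ' w W ≠ ⊤ :=
    have := (hP σ' τ' w).1
    measure_ne_top _ _
  rw [hP.measure_eq_sum hW hTail hu,
    ENNReal.toReal_sum fun w _ => ENNReal.mul_ne_top ENNReal.ofReal_ne_top (hfin _ _ w)]
  simp only [ENNReal.toReal_mul, ENNReal.toReal_ofReal (G.p_nonneg u hu _)]

lemma Game.IsInducedFam.residual_branchStrat_right (hP : G.IsInducedFam P)
    (hσ : G.IsMaxStrategy σ) {t : V → List V → V} (ht : ∀ w, G.IsMinStrategy (t w))
    (huw : G.E u w) :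
    P (G.residual u w σ) (G.residual u w (G.branchStrat u t)) w = P (G.residual u w σ) (t w) w :=
  hP.eq_of_agree (IsStrategyOn.residual hσ huw) ((IsStrategyOn.branchStrat ht).residual huw) w
    fun _ _ hl => ⟨rfl, G.residual_branchStrat hl⟩

lemma Game.IsInducedFam.residual_branchStrat_left (hP : G.IsInducedFam P)
    (hτ : G.IsMinStrategy τ) {t : V → List V → V} (ht : ∀ w, G.IsMaxStrategy (t w))
    (huw : G.E u w) :
    P (G.residual u w (G.branchStrat u t)) (G.residual u w τ) w = P (t w) (G.residual u w τ) w :=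
  hP.eq_of_agree ((IsStrategyOn.branchStrat ht).residual huw) (IsStrategyOn.residual hτ huw) w
    fun _ _ hl => ⟨G.residual_branchStrat hl, rfl⟩

end Decomposition

section Value

variable {V : Type} [Fintype V] [MeasurableSpace V] {G : Game V} {W : Set (ℕ → V)}
  {P : StratFam V} {σ τ : List V → V} {v : V} {c : ℝ}

noncomputable def Game.guarantee (G : Game V) (W : Set (ℕ → V)) (P : StratFam V)
    (σ : List V → V) (v : V) : ℝ :=
  ⨅ τ : {τ // G.IsMinStrategy τ}, (P σ τ.1 v W).toReal

lemma Game.guarantee_le (hτ : G.IsMinStrategy τ) : G.guarantee W P σ v ≤ (P σ τ v W).toReal :=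
  ciInf_le (f := fun τ : {τ // G.IsMinStrategy τ} => (P σ τ.1 v W).toReal)
    ⟨0, by rintro _ ⟨τ, rfl⟩; exact ENNReal.toReal_nonneg⟩ ⟨τ, hτ⟩

lemma Game.le_guarantee (h : ∀ τ, G.IsMinStrategy τ → c ≤ (P σ τ v W).toReal) :
    c ≤ G.guarantee W P σ v :=
  have : Nonempty {τ // G.IsMinStrategy τ} := ⟨⟨_, G.isStrategyOn_defaultStrat _ v⟩⟩
  le_ciInf fun τ => h τ.1 τ.2

lemma Game.exists_prob_lt_of_guarantee_lt (h : G.guarantee W P σ v < c) :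
    ∃ τ, G.IsMinStrategy τ ∧ (P σ τ v W).toReal < c := by
  have : Nonempty {τ // G.IsMinStrategy τ} := ⟨⟨_, G.isStrategyOn_defaultStrat _ v⟩⟩
  obtain ⟨τ, hτ⟩ := exists_lt_of_ciInf_lt h
  exact ⟨τ.1, τ.2, hτ⟩

lemma Game.guarantee_le_val (hP : G.IsInducedFam P) (hσ : G.IsMaxStrategy σ) :
    G.guarantee W P σ v ≤ G.val W P v := by
  refine le_ciSup (f := fun σ : {σ // G.IsMaxStrategy σ} => G.guarantee W P σ.1 v) ⟨1, ?_⟩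
    ⟨σ, hσ⟩
  rintro _ ⟨σ', rfl⟩
  have := (hP σ'.1 (G.defaultStrat v) v).1
  exact (G.guarantee_le (G.isStrategyOn_defaultStrat _ v)).trans
    (ENNReal.toReal_le_of_le_ofReal zero_le_one (by simpa using prob_le_one))

lemma Game.val_le (h : ∀ σ, G.IsMaxStrategy σ → G.guarantee W P σ v ≤ c) : G.val W P v ≤ c :=
  have : Nonempty {σ // G.IsMaxStrategy σ} := ⟨⟨_, G.isStrategyOn_defaultStrat _ v⟩⟩
  ciSup_le fun σ => h σ.1 σ.2

lemma Game.exists_lt_guarantee_of_lt_val (h : c < G.val W P v) :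
    ∃ σ, G.IsMaxStrategy σ ∧ c < G.guarantee W P σ v := by
  have : Nonempty {σ // G.IsMaxStrategy σ} := ⟨⟨_, G.isStrategyOn_defaultStrat _ v⟩⟩
  obtain ⟨σ, hσ⟩ := exists_lt_of_lt_ciSup h
  exact ⟨σ.1, σ.2, hσ⟩

end Value

section Harmonic

variable {V : Type} [Fintype V] [MeasurableSpace V] [MeasurableSingletonClass V] {G : Game V}
  {W : Set (ℕ → V)} {P : StratFam V} {u : V}

lemma Game.val_le_sum_of_mem_random (hW : MeasurableSet W) (hTail : IsTail W)
    (hP : G.IsInducedFam P) (hu : u ∈ G.VR) :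
    G.val W P u ≤ ∑ w, G.p u w * G.val W P w := by
  refine G.val_le fun σ hσ => le_of_forall_pos_le_add fun ε hε => ?_
  have hresponse (w : V) : ∃ τ, G.IsMinStrategy τ ∧
      (0 < G.p u w → (P (G.residual u w σ) τ w W).toReal < G.val W P w + ε) := by
    by_cases hp : 0 < G.p u w
    · obtain ⟨τ, hτ, hlt⟩ := G.exists_prob_lt_of_guarantee_lt
        ((G.guarantee_le_val hP (IsStrategyOn.residual hσ ((G.p_pos_iff u hu w).1 hp))).trans_lt
          (lt_add_of_pos_right _ hε))
      exact ⟨τ, hτ, fun _ => hlt⟩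
    · exact ⟨_, G.isStrategyOn_defaultStrat _ w, fun h => absurd h hp⟩
  choose t ht hlt using hresponse
  calc G.guarantee W P σ u ≤ (P σ (G.branchStrat u t) u W).toReal :=
        G.guarantee_le (IsStrategyOn.branchStrat ht)
    _ = ∑ w, G.p u w *
          (P (G.residual u w σ) (G.residual u w (G.branchStrat u t)) w W).toReal :=
        hP.prob_toReal_eq_sum hW hTail hu
    _ ≤ ∑ w, G.p u w * (G.val W P w + ε) := by
        refine Finset.sum_le_sum fun w _ => ?_
        rcases (G.p_nonneg u hu w).eq_or_lt with hp | hp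
        · simp [← hp]
        rw [hP.residual_branchStrat_right hσ ht ((G.p_pos_iff u hu w).1 hp)]
        exact mul_le_mul_of_nonneg_left (hlt w hp).le hp.le
    _ = ∑ w, G.p u w * G.val W P w + ε := G.sum_p_mul_add hu _ _

lemma Game.sum_le_val_of_mem_random (hW : MeasurableSet W) (hTail : IsTail W)
    (hP : G.IsInducedFam P) (hu : u ∈ G.VR) :
    ∑ w, G.p u w * G.val W P w ≤ G.val W P u := by
  refine le_of_forall_pos_le_add fun ε hε => ?_
  have hgood (w : V) : ∃ σ, G.IsMaxStrategy σ ∧ G.val W P w - ε < G.guarantee W P σ w :=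
    G.exists_lt_guarantee_of_lt_val (sub_lt_self _ hε)
  choose s hs hlt using hgood
  have hbranch : G.IsMaxStrategy (G.branchStrat u s) := IsStrategyOn.branchStrat hs
  suffices ∑ w, G.p u w * G.val W P w - ε ≤ G.guarantee W P (G.branchStrat u s) u by
    linarith [G.guarantee_le_val (W := W) (v := u) hP hbranch]
  refine G.le_guarantee fun τ hτ => ?_
  calc ∑ w, G.p u w * G.val W P w - ε = ∑ w, G.p u w * (G.val W P w + -ε) := by
        rw [G.sum_p_mul_add hu, sub_eq_add_neg]
    _ ≤ ∑ w, G.p u w *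
          (P (G.residual u w (G.branchStrat u s)) (G.residual u w τ) w W).toReal := by
        refine Finset.sum_le_sum fun w _ => ?_
        rcases (G.p_nonneg u hu w).eq_or_lt with hp | hp
        · simp [← hp]
        have huw := (G.p_pos_iff u hu w).1 hp
        rw [hP.residual_branchStrat_left hτ hs huw]
        refine mul_le_mul_of_nonneg_left ?_ hp.le
        linarith [hlt w, G.guarantee_le (W := W) (P := P) (σ := s w) (v := w)
          (IsStrategyOn.residual hτ huw)]
    _ = (P (G.branchStrat u s) τ u W).toReal := (hP.prob_toReal_eq_sum hW hTail hu).symm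

theorem Game.val_eq_sum_of_mem_random (hW : MeasurableSet W) (hTail : IsTail W)
    (hP : G.IsInducedFam P) (hu : u ∈ G.VR) :
    G.val W P u = ∑ w, G.p u w * G.val W P w :=
  le_antisymm (G.val_le_sum_of_mem_random hW hTail hP hu)
    (G.sum_le_val_of_mem_random hW hTail hP hu)

end Harmonic

section ValueMartingale

variable {V : Type} [Fintype V] [MeasurableSpace V] [MeasurableSingletonClass V] {G : Game V}
  {σ τ : List V → V} {v : V} {μ : Measure (ℕ → V)} {g : V → ℝ}

def Game.IsHarmonic (G : Game V) (σ τ : List V → V) (g : V → ℝ) : Prop :=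
  ∀ h u, G.FinitePlay h → h.getLast? = some u → ∑ x, (G.transition σ τ h u x).toReal * g x = g u

lemma Game.isHarmonic_val {W : Set (ℕ → V)} {P : StratFam V} (hW : MeasurableSet W)
    (hTail : IsTail W) (hP : G.IsInducedFam P) (hCons : G.Consistent W P)
    (hσ : G.IsMaxStrategy σ) (hτ : G.IsMinStrategy τ) : G.IsHarmonic σ τ (G.val W P) := by
  intro h u hh hu
  rcases G.cover u with hM | hm | hR
  · simp [G.transition_of_mem_max hM, apply_ite ENNReal.toReal,
      hCons u (σ h) (hσ h hh u hu hM) (Or.inl hM)]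
  · simp [G.transition_of_mem_min hm, apply_ite ENNReal.toReal,
      hCons u (τ h) (hτ h hh u hu hm) (Or.inr hm)]
  · simp only [G.transition_of_mem_random hR, ENNReal.toReal_ofReal (G.p_nonneg u hR _)]
    exact (G.val_eq_sum_of_mem_random hW hTail hP hR).symm

lemma Game.IsInduced.setIntegral_cyl_comp_length (hμ : G.IsInduced σ τ v μ)
    (hσ : G.IsMaxStrategy σ) (hτ : G.IsMinStrategy τ) (hg : G.IsHarmonic σ τ g) {l : List V}
    {u : V} (hu : l.getLast? = some u) :
    ∫ ω in cyl l, g (ω l.length) ∂μ = μ.real (cyl l) * g u := by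
  have := hμ.1
  by_cases h0 : μ (cyl l) = 0
  · rw [Measure.restrict_eq_zero.2 h0, integral_zero_measure, measureReal_def, h0,
      ENNReal.toReal_zero, zero_mul]
  have hl : l ≠ [] := by rintro rfl; simp at hu
  rw [setIntegral_comp_eval, ← hg l u (hμ.finitePlay hσ hτ h0 hl) hu, Finset.mul_sum]
  refine Finset.sum_congr rfl fun x _ => ?_
  rw [← cyl_append, measureReal_def, hμ.measure_cyl_append hu, ENNReal.toReal_mul,
    measureReal_def, mul_assoc]

lemma Game.IsInduced.setIntegral_comp_succ (hμ : G.IsInduced σ τ v μ) (hσ : G.IsMaxStrategy σ)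
    (hτ : G.IsMinStrategy τ) (hg : G.IsHarmonic σ τ g) {n : ℕ} {s : Set (ℕ → V)}
    (hs : MeasurableSet[hist V n] s) :
    ∫ ω in s, g (ω n) ∂μ = ∫ ω in s, g (ω (n + 1)) ∂μ := by
  have := hμ.1
  obtain ⟨B, rfl⟩ := exists_finset_eq_biUnion_cyl hs
  have hdisj : (B : Set (Fin (n + 1) → V)).PairwiseDisjoint fun f => cyl (List.ofFn f) := by
    intro f _ f' _ hff'
    simp only [Function.onFun, disjoint_left, cyl_ofFn, mem_ofPred_eq]
    exact fun ω h h' => hff' (funext fun i => (h i).symm.trans (h' i))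
  have hint (k : ℕ) : Integrable (fun ω : ℕ → V => g (ω k)) μ :=
    Integrable.of_finite.comp_measurable (measurable_pi_apply k)
  rw [integral_biUnion_finset _ (fun f _ => measurableSet_cyl _) hdisj
      fun _ _ => (hint n).integrableOn,
    integral_biUnion_finset _ (fun f _ => measurableSet_cyl _) hdisj
      fun _ _ => (hint _).integrableOn]
  refine Finset.sum_congr rfl fun f _ => ?_
  have hlast : (List.ofFn f).getLast? = some (f (Fin.last n)) := by
    rw [List.getLast?_eq_some_getLast (by simp), List.getLast_ofFn_succ]
  have hn := setIntegral_cyl_comp_last (μ := μ) hlast g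
  have hsucc := hμ.setIntegral_cyl_comp_length hσ hτ hg hlast
  simp only [List.length_ofFn, Nat.add_sub_cancel] at hn hsucc
  rw [hn, hsucc]

lemma Game.IsInduced.martingale (hμ : G.IsInduced σ τ v μ) (hσ : G.IsMaxStrategy σ)
    (hτ : G.IsMinStrategy τ) (hg : G.IsHarmonic σ τ g) :
    Martingale (fun n ω => g (ω n)) histFiltration μ := by
  have := hμ.1
  refine martingale_of_setIntegral_eq_succ (fun n => ?_)
    (fun n => Integrable.of_finite.comp_measurable (measurable_pi_apply n))
    fun n s hs => hμ.setIntegral_comp_succ hσ hτ hg hs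
  exact ((measurable_of_finite g).comp (measurable_hist_eval n)).stronglyMeasurable

end ValueMartingale

variable {V : Type} [Fintype V] [MeasurableSpace V] [DiscreteMeasurableSpace V]

/-- in a consistent game, `E[val(Vₙ)] = val(v₀)` for every `n`; in particular
the same holds for the process stopped at any stopping time. -/
theorem val_expectation_constant
    (G : Game V) (W : Set (ℕ → V)) (hW : MeasurableSet W) (hTail : IsTail W)
    (P : StratFam V) (hP : G.IsInducedFam P) (hCons : G.Consistent W P)
    (σ τ : List V → V) (hσ : G.IsMaxStrategy σ) (hτ : G.IsMinStrategy τ) (v₀ : V) :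
    (∀ n : ℕ, ∫ ω, G.val W P (ω n) ∂(P σ τ v₀) = G.val W P v₀) ∧
    ∀ N : (ℕ → V) → ℕ∞, (∀ n : ℕ, MeasurableSet[hist V n] {ω | N ω ≤ (n : ℕ∞)}) →
      ∀ n : ℕ,
        ∫ ω, G.val W P (ω ((min (N ω) (n : ℕ∞)).toNat)) ∂(P σ τ v₀) = G.val W P v₀ := by
  have hμ := hP σ τ v₀
  have := hμ.1
  have hmart := hμ.martingale hσ hτ (G.isHarmonic_val hW hTail hP hCons hσ hτ)
  have hstart := hμ.integral_comp_zero (G.val W P)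
  refine ⟨fun n => (hmart.integral_eq_integral_zero n).trans hstart, fun N hN n => ?_⟩
  have hstopped : (fun ω => G.val W P (ω (min (N ω) n).toNat)) =
      stoppedProcess (fun n ω => G.val W P (ω n)) N n :=
    funext fun ω => (stoppedProcess_eq_toNat_min (τ := N) (fun n ω => G.val W P (ω n)) n ω).symm
  rw [hstopped, hmart.integral_stoppedProcess hN n, hstart]

end StochasticGames
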